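/- Let a ∈ W_n(K)^× and fix y ∈ W_n(K^sep)^× with 𝔮(y) = a. The map Gal(K(𝔮^{-1}a)/K) → W_n(F_p)^× sending g to g(y)·y^{-1} is a well-defined injective group homomorphism that does not depend on the choice of y. In particular, Gal(K(𝔮^{-1}a)/K) is abelian and isomorphic to a subgroup of (ℤ/p^nℤ)^×, since W_n(F_p) ≅ ℤ/p^nℤ as rings. -/

import Mathlib

noncomputable section

open WittVector

/-- Componentwise map on truncated Witt vectors induced by a ring homomorphism. -/
noncomputable def TruncatedWittVector.mapRingHom (p n : ℕ) [hp : Fact p.Prime]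
    {R S : Type*} [CommRing R] [CommRing S] (f : R →+* S) :
    TruncatedWittVector p n R →+* TruncatedWittVector p n S :=
  RingHom.liftOfRightInverse (WittVector.truncate n) TruncatedWittVector.out
    (fun x => x.truncateFun_out)
    ⟨(WittVector.truncate n).comp (WittVector.map f), by
      intro x hx
      rw [RingHom.mem_ker] at hx ⊢
      rw [RingHom.comp_apply, ← RingHom.mem_ker, WittVector.mem_ker_truncate]
      rw [← RingHom.mem_ker, WittVector.mem_ker_truncate] at hx
      intro i hi
      rw [WittVector.map_coeff, hx i hi, map_zero]⟩

/-- The map `𝔮 x = F(x) · x⁻¹` on the unit group of truncated Witt vectors,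
where `F` is the (componentwise `p`-th power) Frobenius. -/
noncomputable def wittQ (p n : ℕ) [Fact p.Prime] (R : Type*) [CommRing R] [CharP R p] :
    (TruncatedWittVector p n R)ˣ →* (TruncatedWittVector p n R)ˣ :=
  (Units.map (TruncatedWittVector.mapRingHom p n (frobenius R p)).toMonoidHom) /
    (MonoidHom.id _)

/-- The map `𝔮 x = F(x) · x⁻¹` on the unit group of (full) Witt vectors. -/
noncomputable def wittQFull (p : ℕ) [Fact p.Prime] (R : Type*) [CommRing R] [CharP R p] :
    (WittVector p R)ˣ →* (WittVector p R)ˣ :=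
  (Units.map (WittVector.map (frobenius R p)).toMonoidHom) / (MonoidHom.id _)

/-- The unit-group homomorphism `W_n(K)ˣ → W_n(L)ˣ` induced by an algebra map. -/
noncomputable def wittIncl (p n : ℕ) [Fact p.Prime] (K L : Type*) [CommRing K] [CommRing L]
    [Algebra K L] : (TruncatedWittVector p n K)ˣ →* (TruncatedWittVector p n L)ˣ :=
  Units.map (TruncatedWittVector.mapRingHom p n (algebraMap K L)).toMonoidHom

/-- The subfield `K(y₀, …, y_{n-1})` of `Ω` generated over `K` by the components of a
truncated Witt vector `y` over `Ω`. -/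
noncomputable def wittGenField (p n : ℕ) (K Ω : Type*) [Field K] [Field Ω] [Algebra K Ω]
    (y : TruncatedWittVector p n Ω) : IntermediateField K Ω :=
  IntermediateField.adjoin K (Set.range fun i => y.coeff i)

/-!
Because `𝔮` commutes with ring homomorphisms and every `g ∈ Gal(Kˢᵉᵖ/K)` fixes `a`, `g(y)` is
again a solution of `𝔮(x) = a`, so `g(y)·y⁻¹` lies in the kernel of `𝔮`. That kernel consists of
the Witt vectors whose components satisfy `x^p = x`, i.e. it is `Wₙ(𝔽_p)ˣ`. Its elements are
Galois-invariant, which makes `g ↦ g(y)·y⁻¹` multiplicative, and replacing `y` by another solution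
`w·y` with `w ∈ Wₙ(𝔽_p)ˣ` does not change it. Two automorphisms have the same value iff they agree
on `y₀, …, y_{n-1}`, i.e. on `K(𝔮⁻¹a)`; since `Kˢᵉᵖ/K` is normal, automorphisms of `K(𝔮⁻¹a)`
lift, and `Gal(K(𝔮⁻¹a)/K)` embeds into `Wₙ(𝔽_p)ˣ ≅ (ℤ/pⁿℤ)ˣ`.
-/

namespace TruncatedWittVector

variable {p n : ℕ} [Fact p.Prime]

theorem coeff_mapRingHom {R S : Type*} [CommRing R] [CommRing S] (f : R →+* S)
    (x : TruncatedWittVector p n R) (i : Fin n) :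
    (mapRingHom p n f x).coeff i = f (x.coeff i) := by
  have hx : WittVector.truncate n x.out = x := x.truncateFun_out
  conv_lhs => rw [← hx]
  erw [mapRingHom, RingHom.liftOfRightInverse_comp_apply,
    RingHom.comp_apply, WittVector.coeff_truncate, WittVector.map_coeff]
  conv_rhs => rw [← hx]
  rw [WittVector.coeff_truncate]

theorem mapRingHom_mapRingHom {R S T : Type*} [CommRing R] [CommRing S] [CommRing T]
    (f : R →+* S) (g : S →+* T) (x : TruncatedWittVector p n R) :
    mapRingHom p n g (mapRingHom p n f x) = mapRingHom p n (g.comp f) x :=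
  ext fun i => by simp only [coeff_mapRingHom, RingHom.comp_apply]

theorem mapRingHom_injective {R S : Type*} [CommRing R] [CommRing S] {f : R →+* S}
    (hf : Function.Injective f) : Function.Injective (mapRingHom p n f) :=
  fun x y h => ext fun i => hf <| by rw [← coeff_mapRingHom, ← coeff_mapRingHom, h]

variable (p n) in
def unitsMap {R S : Type*} [CommRing R] [CommRing S] (f : R →+* S) :
    (TruncatedWittVector p n R)ˣ →* (TruncatedWittVector p n S)ˣ :=
  Units.map (mapRingHom p n f).toMonoidHom

@[simp]
theorem coe_unitsMap {R S : Type*} [CommRing R] [CommRing S] (f : R →+* S)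
    (u : (TruncatedWittVector p n R)ˣ) : (unitsMap p n f u : TruncatedWittVector p n S) =
      mapRingHom p n f u :=
  rfl

theorem unitsMap_unitsMap {R S T : Type*} [CommRing R] [CommRing S] [CommRing T]
    (f : R →+* S) (g : S →+* T) (u : (TruncatedWittVector p n R)ˣ) :
    unitsMap p n g (unitsMap p n f u) = unitsMap p n (g.comp f) u :=
  Units.ext <| by simp only [coe_unitsMap, mapRingHom_mapRingHom]

theorem unitsMap_injective {R S : Type*} [CommRing R] [CommRing S] {f : R →+* S}
    (hf : Function.Injective f) : Function.Injective (unitsMap p n f) :=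
  fun _ _ h => Units.ext <| mapRingHom_injective hf <| by
    simpa only [coe_unitsMap] using congrArg Units.val h

theorem unitsMap_eq_unitsMap_iff {R S : Type*} [CommRing R] [CommRing S] {f g : R →+* S}
    {u : (TruncatedWittVector p n R)ˣ} :
    unitsMap p n f u = unitsMap p n g u ↔ ∀ i, f (u.val.coeff i) = g (u.val.coeff i) := by
  simp only [Units.ext_iff, coe_unitsMap, TruncatedWittVector.ext_iff, coeff_mapRingHom]

end TruncatedWittVector

open TruncatedWittVector

section Frobenius

variable {p n : ℕ} [Fact p.Prime]

theorem wittQ_apply {R : Type*} [CommRing R] [CharP R p] (u : (TruncatedWittVector p n R)ˣ) :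
    wittQ p n R u = unitsMap p n (frobenius R p) u * u⁻¹ :=
  div_eq_mul_inv _ _

theorem wittQ_unitsMap {R S : Type*} [CommRing R] [CommRing S] [CharP R p] [CharP S p]
    (f : R →+* S) (u : (TruncatedWittVector p n R)ˣ) :
    wittQ p n S (unitsMap p n f u) = unitsMap p n f (wittQ p n R u) := by
  rw [wittQ_apply, wittQ_apply, map_mul, map_inv, unitsMap_unitsMap, unitsMap_unitsMap,
    RingHom.frobenius_comm]

theorem ZMod.exists_castHom_eq_of_pow_eq_self {F : Type*} [Field F] [CharP F p] {x : F}
    (hx : x ^ p = x) : ∃ z : ZMod p, ZMod.castHom dvd_rfl F z = x := by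
  rw [← RingHom.mem_fieldRange, ZMod.fieldRange_castHom_eq_bot p]
  exact (Subfield.mem_bot_iff_pow_eq_self F p).2 hx

theorem TruncatedWittVector.exists_mapRingHom_castHom_eq {F : Type*} [Field F] [CharP F p]
    {x : TruncatedWittVector p n F} (hx : mapRingHom p n (frobenius F p) x = x) :
    ∃ w, mapRingHom p n (ZMod.castHom dvd_rfl F) w = x := by
  choose z hz using fun i => ZMod.exists_castHom_eq_of_pow_eq_self (x := x.coeff i) <| by
    simpa only [coeff_mapRingHom, frobenius_def] using congrArg (coeff i) hx
  exact ⟨mk p z, ext fun i => by rw [coeff_mapRingHom, coeff_mk, hz]⟩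

theorem exists_unitsMap_castHom_eq_of_wittQ_eq_one {F : Type*} [Field F] [CharP F p]
    {u : (TruncatedWittVector p n F)ˣ} (hu : wittQ p n F u = 1) :
    ∃ w, unitsMap p n (ZMod.castHom dvd_rfl F) w = u := by
  have hFu : unitsMap p n (frobenius F p) u = u := by rwa [wittQ_apply, mul_inv_eq_one] at hu
  have hFu_inv : unitsMap p n (frobenius F p) u⁻¹ = u⁻¹ := by rw [map_inv, hFu]
  obtain ⟨w, hw⟩ := exists_mapRingHom_castHom_eq (congrArg Units.val hFu)
  obtain ⟨w', hw'⟩ := exists_mapRingHom_castHom_eq (congrArg Units.val hFu_inv)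
  have hww' : w * w' = 1 := mapRingHom_injective (ZMod.castHom dvd_rfl F).injective <| by
    rw [map_mul, hw, hw', Units.mul_inv, map_one]
  exact ⟨Units.mkOfMulEqOne w w' hww', Units.ext hw⟩

theorem exists_unitsMap_castHom_mul_eq_of_wittQ_eq {F : Type*} [Field F] [CharP F p]
    {y y' : (TruncatedWittVector p n F)ˣ} (h : wittQ p n F y' = wittQ p n F y) :
    ∃ w, unitsMap p n (ZMod.castHom dvd_rfl F) w * y = y' := by
  obtain ⟨w, hw⟩ := exists_unitsMap_castHom_eq_of_wittQ_eq_one (u := y' * y⁻¹) <| by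
    rw [map_mul, map_inv, h, mul_inv_cancel]
  exact ⟨w, by rw [hw, inv_mul_cancel_right]⟩

theorem unitsMap_unitsMap_castHom {R S : Type*} [CommRing R] [CommRing S] [CharP R p] [CharP S p]
    (f : R →+* S) (w : (TruncatedWittVector p n (ZMod p))ˣ) :
    unitsMap p n f (unitsMap p n (ZMod.castHom dvd_rfl R) w) =
      unitsMap p n (ZMod.castHom dvd_rfl S) w := by
  rw [unitsMap_unitsMap, RingHom.ext_zmod (f.comp _)]

end Frobenius

section Galois

variable {p n : ℕ} [Fact p.Prime] {K Ω : Type*} [CommRing K] [Field Ω] [Algebra K Ω]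

theorem unitsMap_algEquiv_wittIncl (g : Ω ≃ₐ[K] Ω) (a : (TruncatedWittVector p n K)ˣ) :
    unitsMap p n (RingHomClass.toRingHom g) (wittIncl p n K Ω a) = wittIncl p n K Ω a := by
  change unitsMap p n _ (unitsMap p n (algebraMap K Ω) a) = unitsMap p n (algebraMap K Ω) a
  rw [unitsMap_unitsMap]
  congr 2
  exact RingHom.ext g.commutes

variable (p n) in
def wittKummerChar (y : (TruncatedWittVector p n Ω)ˣ) (g : Ω ≃ₐ[K] Ω) :
    (TruncatedWittVector p n Ω)ˣ :=
  unitsMap p n (RingHomClass.toRingHom g) y * y⁻¹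

variable [CharP Ω p]

variable {a : (TruncatedWittVector p n K)ˣ} {y : (TruncatedWittVector p n Ω)ˣ}

theorem exists_unitsMap_castHom_eq_wittKummerChar (hy : wittQ p n Ω y = wittIncl p n K Ω a)
    (g : Ω ≃ₐ[K] Ω) : ∃ w, unitsMap p n (ZMod.castHom dvd_rfl Ω) w = wittKummerChar p n y g := by
  obtain ⟨w, hw⟩ := exists_unitsMap_castHom_mul_eq_of_wittQ_eq (y := y)
    (y' := unitsMap p n (RingHomClass.toRingHom g) y) <| by
      rw [wittQ_unitsMap, hy, unitsMap_algEquiv_wittIncl]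
  exact ⟨w, by rw [wittKummerChar, ← hw, mul_inv_cancel_right]⟩

theorem wittKummerChar_mul (hy : wittQ p n Ω y = wittIncl p n K Ω a) (g h : Ω ≃ₐ[K] Ω) :
    wittKummerChar p n y (g * h) = wittKummerChar p n y g * wittKummerChar p n y h := by
  obtain ⟨w, hw⟩ := exists_unitsMap_castHom_eq_wittKummerChar hy h
  have hgh : RingHomClass.toRingHom (g * h) =
      (RingHomClass.toRingHom g).comp (RingHomClass.toRingHom h) := rfl
  have hh : unitsMap p n (RingHomClass.toRingHom h) y = wittKummerChar p n y h * y := by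
    rw [wittKummerChar, inv_mul_cancel_right]
  rw [wittKummerChar, hgh, ← unitsMap_unitsMap, hh, map_mul, ← hw, unitsMap_unitsMap_castHom,
    mul_assoc, mul_comm, wittKummerChar]

theorem wittKummerChar_eq_of_wittQ_eq {y' : (TruncatedWittVector p n Ω)ˣ}
    (h : wittQ p n Ω y' = wittQ p n Ω y) (g : Ω ≃ₐ[K] Ω) :
    wittKummerChar p n y' g = wittKummerChar p n y g := by
  obtain ⟨w, rfl⟩ := exists_unitsMap_castHom_mul_eq_of_wittQ_eq h
  rw [wittKummerChar, wittKummerChar, map_mul, unitsMap_unitsMap_castHom, mul_inv,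
    mul_mul_mul_comm, mul_inv_cancel, one_mul]

end Galois

section GaloisField

variable {p n : ℕ} [Fact p.Prime] {K Ω : Type*} [Field K] [Field Ω] [Algebra K Ω]

theorem wittKummerChar_eq_wittKummerChar_iff {y : (TruncatedWittVector p n Ω)ˣ}
    {g h : Ω ≃ₐ[K] Ω} : wittKummerChar p n y g = wittKummerChar p n y h ↔
      ∀ z : wittGenField p n K Ω y, g z = h z := by
  rw [wittKummerChar, wittKummerChar, mul_left_inj, unitsMap_eq_unitsMap_iff]
  constructor
  · intro hcoeff z
    let E : IntermediateField K Ω :=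
      (AlgHom.equalizer (g : Ω →ₐ[K] Ω) h).toIntermediateField fun x hx => by
        rw [AlgHom.mem_equalizer, map_inv₀, map_inv₀, hx]
    have hLE : wittGenField p n K Ω y ≤ E :=
      IntermediateField.adjoin_le_iff.2 (Set.range_subset_iff.2 hcoeff)
    exact hLE z.2
  · intro hL i
    exact hL ⟨_, IntermediateField.subset_adjoin K _ ⟨i, rfl⟩⟩

theorem AlgEquiv.liftNormal_apply_coe [Normal K Ω] {L : IntermediateField K Ω}
    (τ : L ≃ₐ[K] L) (z : L) : τ.liftNormal Ω z = τ z :=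
  τ.liftNormal_commutes Ω z

variable [CharP Ω p] {a : (TruncatedWittVector p n K)ˣ} {y : (TruncatedWittVector p n Ω)ˣ}
  [Normal K Ω]

variable (p n) in
def wittKummerGalHom (hy : wittQ p n Ω y = wittIncl p n K Ω a) :
    (wittGenField p n K Ω y ≃ₐ[K] wittGenField p n K Ω y) →* (TruncatedWittVector p n Ω)ˣ :=
  MonoidHom.mk' (fun τ => wittKummerChar p n y (τ.liftNormal Ω)) fun σ τ => by
    rw [← wittKummerChar_mul hy, wittKummerChar_eq_wittKummerChar_iff]
    intro z
    simp only [AlgEquiv.mul_apply, AlgEquiv.liftNormal_apply_coe]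

theorem wittKummerGalHom_injective (hy : wittQ p n Ω y = wittIncl p n K Ω a) :
    Function.Injective (wittKummerGalHom p n hy) := fun σ τ h =>
  AlgEquiv.ext fun z => Subtype.ext <| by
    rw [← AlgEquiv.liftNormal_apply_coe, ← AlgEquiv.liftNormal_apply_coe]
    exact wittKummerChar_eq_wittKummerChar_iff.1 h z

theorem exists_injective_monoidHom_units_zmod_pow (hy : wittQ p n Ω y = wittIncl p n K Ω a) :
    ∃ ψ : (wittGenField p n K Ω y ≃ₐ[K] wittGenField p n K Ω y) →* (ZMod (p ^ n))ˣ,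
      Function.Injective ψ := by
  let ι := unitsMap p n (ZMod.castHom dvd_rfl Ω)
  have hι : Function.Injective ι := unitsMap_injective (ZMod.castHom dvd_rfl Ω).injective
  let χ := (wittKummerGalHom p n hy).codRestrict ι.range fun τ =>
    exists_unitsMap_castHom_eq_wittKummerChar hy _
  have hχ : Function.Injective χ := fun σ τ h =>
    wittKummerGalHom_injective hy (congrArg Subtype.val h)
  let e := (MonoidHom.ofInjective hι).symm.trans
    (Units.mapEquiv (zmodEquivTrunc p n).toMulEquiv).symm
  exact ⟨e.toMonoidHom.comp χ, e.injective.comp hχ⟩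

end GaloisField

theorem stmt_2_general (p n : ℕ) [Fact p.Prime] (K Ksep : Type*) [Field K]
    [Field Ksep] [Algebra K Ksep] [IsSepClosure K Ksep] [CharP Ksep p]
    (a : (TruncatedWittVector p n K)ˣ) (y : (TruncatedWittVector p n Ksep)ˣ)
    (hy : wittQ p n Ksep y = wittIncl p n K Ksep a) :
    let L := wittGenField p n K Ksep ↑y
    let Φ : (Ksep ≃ₐ[K] Ksep) → (TruncatedWittVector p n Ksep)ˣ := fun g =>
      Units.map (TruncatedWittVector.mapRingHom p n
        (RingHomClass.toRingHom g)).toMonoidHom y * y⁻¹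
    -- well-defined: the values lie in (the image of) Wₙ(𝔽_p)ˣ
    (∀ g, ∃ w : (TruncatedWittVector p n (ZMod p))ˣ,
        Units.map (TruncatedWittVector.mapRingHom p n
          (ZMod.castHom (dvd_refl p) Ksep)).toMonoidHom w = Φ g) ∧
    -- it is a group homomorphism
    (∀ g h, Φ (g * h) = Φ g * Φ h) ∧
    -- it depends only on the restriction to L, and is injective in that restriction
    (∀ g h : Ksep ≃ₐ[K] Ksep, Φ g = Φ h ↔ ∀ z : ↥L, g ↑z = h ↑z) ∧
    -- every K-automorphism of L arises by restriction, so Φ is defined on all of Gal(L/K)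
    (∀ τ : ↥L ≃ₐ[K] ↥L, ∃ g : Ksep ≃ₐ[K] Ksep, ∀ z : ↥L, g ↑z = ↑(τ z)) ∧
    -- it does not depend on the choice of the solution y
    (∀ y' : (TruncatedWittVector p n Ksep)ˣ,
        wittQ p n Ksep y' = wittIncl p n K Ksep a →
        ∀ g : Ksep ≃ₐ[K] Ksep,
          Units.map (TruncatedWittVector.mapRingHom p n
            (RingHomClass.toRingHom g)).toMonoidHom y' * y'⁻¹ = Φ g) ∧
    -- Gal(L/K) is abelian and embeds into (ℤ/pⁿℤ)ˣ ≅ Wₙ(𝔽_p)ˣ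
    (∀ σ τ : ↥L ≃ₐ[K] ↥L, σ * τ = τ * σ) ∧
    (∃ ψ : (↥L ≃ₐ[K] ↥L) →* (ZMod (p ^ n))ˣ, Function.Injective ψ) := by
  intro L Φ
  have hχ := wittKummerGalHom_injective hy
  refine ⟨exists_unitsMap_castHom_eq_wittKummerChar hy, wittKummerChar_mul hy,
    fun g h => wittKummerChar_eq_wittKummerChar_iff,
    fun τ => ⟨τ.liftNormal Ksep, τ.liftNormal_apply_coe⟩,
    fun y' hy' => wittKummerChar_eq_of_wittQ_eq (hy'.trans hy.symm),
    fun σ τ => hχ ?_, exists_injective_monoidHom_units_zmod_pow hy⟩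
  rw [map_mul, map_mul, mul_comm]

/--
Let `a ∈ Wₙ(K)ˣ` and fix `y ∈ Wₙ(Kˢᵉᵖ)ˣ` with `𝔮(y) = a`. The map
`Gal(K(𝔮⁻¹a)/K) → Wₙ(𝔽_p)ˣ` sending `g` to `g(y)·y⁻¹` is a well-defined injective group
homomorphism that does not depend on the choice of `y`.  In particular `Gal(K(𝔮⁻¹a)/K)`
is abelian and isomorphic to a subgroup of `(ℤ/pⁿℤ)ˣ`.  (Elements of the Galois group of
`L = K(𝔮⁻¹a)` over `K` are treated via automorphisms of `Kˢᵉᵖ` restricted to `L`; the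
third clause says the map depends only on, and is injective in, the restriction to `L`.)
-/
theorem stmt_2 (p n : ℕ) [Fact p.Prime] (K Ksep : Type*) [Field K] [CharP K p]
    [Field Ksep] [Algebra K Ksep] [IsSepClosure K Ksep] [CharP Ksep p]
    (a : (TruncatedWittVector p n K)ˣ) (y : (TruncatedWittVector p n Ksep)ˣ)
    (hy : wittQ p n Ksep y = wittIncl p n K Ksep a) :
    let L := wittGenField p n K Ksep ↑y
    let Φ : (Ksep ≃ₐ[K] Ksep) → (TruncatedWittVector p n Ksep)ˣ := fun g =>
      Units.map (TruncatedWittVector.mapRingHom p n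
        (RingHomClass.toRingHom g)).toMonoidHom y * y⁻¹
    -- well-defined: the values lie in (the image of) Wₙ(𝔽_p)ˣ
    (∀ g, ∃ w : (TruncatedWittVector p n (ZMod p))ˣ,
        Units.map (TruncatedWittVector.mapRingHom p n
          (ZMod.castHom (dvd_refl p) Ksep)).toMonoidHom w = Φ g) ∧
    -- it is a group homomorphism
    (∀ g h, Φ (g * h) = Φ g * Φ h) ∧
    -- it depends only on the restriction to L, and is injective in that restriction
    (∀ g h : Ksep ≃ₐ[K] Ksep, Φ g = Φ h ↔ ∀ z : ↥L, g ↑z = h ↑z) ∧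
    -- every K-automorphism of L arises by restriction, so Φ is defined on all of Gal(L/K)
    (∀ τ : ↥L ≃ₐ[K] ↥L, ∃ g : Ksep ≃ₐ[K] Ksep, ∀ z : ↥L, g ↑z = ↑(τ z)) ∧
    -- it does not depend on the choice of the solution y
    (∀ y' : (TruncatedWittVector p n Ksep)ˣ,
        wittQ p n Ksep y' = wittIncl p n K Ksep a →
        ∀ g : Ksep ≃ₐ[K] Ksep,
          Units.map (TruncatedWittVector.mapRingHom p n
            (RingHomClass.toRingHom g)).toMonoidHom y' * y'⁻¹ = Φ g) ∧
    -- Gal(L/K) is abelian and embeds into (ℤ/pⁿℤ)ˣ ≅ Wₙ(𝔽_p)ˣ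
    (∀ σ τ : ↥L ≃ₐ[K] ↥L, σ * τ = τ * σ) ∧
    (∃ ψ : (↥L ≃ₐ[K] ↥L) →* (ZMod (p ^ n))ˣ, Function.Injective ψ) :=
  stmt_2_general p n K Ksep a y hy
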